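/- Consider a BPVE with generating functions Φ_n, first moments m_n > 0 and second moments m_n^{(2)} satisfying m_n^{(2)} < ∞ for every sufficiently large n. Suppose there exist a sequence (c_i)_{i∈ℕ} of positive reals with ∑_{i=0}^∞ c_i/m_i < ∞, an n₁ ∈ ℕ and C > 0 such that ∑_{j=n₁}^∞ ((m^{(2)}_j − m_j)/m_j²)·(C^j ∏_{i=n₁}^{j−1} c_i)^{−1} < ∞ and inf_{n∈ℕ} C^n ∏_{i=0}^{n} c_i > 0. Then there exist n₀ ∈ ℕ and a sequence (p_n)_{n∈ℕ} with p_n ∈ (0,1] for all n and ∑_{n=0}^∞ p_n < ∞, with p_n = C·c_n/m_n for all n ≥ n₀, such that the thinned BPVE with generating functions Φ̃_n(z) := Φ_n(1 − p_n + p_n z) survives, i.e. its extinction probability is strictly less than 1. -/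

import Mathlib

open Filter ENNReal

/-- Probability generating function `Φ_n(z) := ∑_i ρ_n(i) z^i` of the `n`-th offspring
distribution of a branching process in varying environment (BPVE). -/
noncomputable def Phi (ρ : ℕ → ℕ → ℝ) (n : ℕ) (z : ℝ) : ℝ :=
  ∑' i : ℕ, ρ n i * z ^ i

/-- The iterated generating functions `H_0(z) := z`, `H_{n+1} := H_n ∘ Φ_n`;
`H_n(0)` is the probability of extinction by generation `n`, and the extinction
probability is `p_e = lim_n H_n(0)`. -/
noncomputable def Hseq (ρ : ℕ → ℕ → ℝ) : ℕ → ℝ → ℝ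
  | 0 => fun z => z
  | n + 1 => fun z => Hseq ρ n (Phi ρ n z)

/-- First moment `m_n := ∑_i i ρ_n(i) ∈ [0,∞]` of the `n`-th offspring distribution. -/
noncomputable def mom (ρ : ℕ → ℕ → ℝ) (n : ℕ) : ℝ≥0∞ :=
  ∑' i : ℕ, (i : ℝ≥0∞) * ENNReal.ofReal (ρ n i)

/-- Second moment `m_n⁽²⁾ := ∑_i i² ρ_n(i) ∈ [0,∞]` of the `n`-th offspring
distribution. -/
noncomputable def mom2 (ρ : ℕ → ℕ → ℝ) (n : ℕ) : ℝ≥0∞ :=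
  ∑' i : ℕ, (i : ℝ≥0∞) ^ 2 * ENNReal.ofReal (ρ n i)

/-- Iteration `H_0 = id`, `H_{n+1} = H_n ∘ Φ_n` for an arbitrary sequence of
generating functions `Φ`. -/
noncomputable def HseqF (Φ : ℕ → ℝ → ℝ) : ℕ → ℝ → ℝ
  | 0 => fun z => z
  | n + 1 => fun z => HseqF Φ n (Φ n z)

/-!
Agresti's bound `1 / (1 - f s) ≤ 1 / (m (1 - s)) + (m⁽²⁾ - m) / m²`, applied to the thinned
generating function `z ↦ Φ_n(1 - p_n + p_n z)` of mean `p_n m_n = C c_n`, telescopes along the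
composition `Φ̃_{n₀} ∘ ⋯ ∘ Φ̃_{n₀+n-1}`: the reciprocal of `1 - Φ̃_{n₀} ∘ ⋯ ∘ Φ̃_{n₀+n-1}(0)` is
at most `C^{n₀} ∏_{n₁ ≤ i < n₀} c_i` times a partial sum of the convergent series in the hypothesis
plus `1 / (C^{n₀+n} ∏_{n₁ ≤ i < n₀+n} c_i)`, which the infimum hypothesis bounds. So these tail
compositions stay uniformly below `1`, and the first `n₀` thinned generating functions, which
satisfy `1 - Φ̃_k(z) ≥ p_k (1 - ρ_k(0)) (1 - z)`, keep `H̃_n(0)` uniformly below `1` as well.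
-/

open Finset Set

section GeomSum

variable {s : ℝ}

lemma geom_sum_le_card (h0 : 0 ≤ s) (h1 : s ≤ 1) (n : ℕ) : ∑ k ∈ range n, s ^ k ≤ n := by
  simpa using Finset.sum_le_card_nsmul (range n) (s ^ ·) 1 fun k _ => pow_le_one₀ h0 h1

lemma cast_sub_geom_sum_le (h0 : 0 ≤ s) (h1 : s ≤ 1) (n : ℕ) :
    n - ∑ k ∈ range n, s ^ k ≤ (1 - s) * (n - 1) * ∑ k ∈ range n, s ^ k := by
  induction n with
  | zero => simp
  | succ n ih =>
    have hstep : 1 - s ^ n = (1 - s) * ∑ k ∈ range n, s ^ k := (mul_neg_geom_sum s n).symm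
    rw [sum_range_succ]
    push_cast
    nlinarith [mul_nonneg (mul_nonneg (sub_nonneg.2 h1) n.cast_nonneg) (pow_nonneg h0 n)]

lemma nat_mul_geom_sum_le_of_le (h0 : 0 ≤ s) (h1 : s ≤ 1) {i j : ℕ} (hij : i ≤ j) :
    i * ∑ k ∈ range j, s ^ k ≤ j * ∑ k ∈ range i, s ^ k := by
  have htail : i * ∑ k ∈ Ico i j, s ^ k ≤ (j - i : ℕ) * ∑ k ∈ range i, s ^ k := by
    rw [mul_sum, ← Nat.card_Ico, ← nsmul_eq_mul]
    refine sum_le_card_nsmul _ _ _ fun k hk => ?_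
    simpa using card_nsmul_le_sum (range i) (s ^ ·) (s ^ k) fun l hl =>
      pow_le_pow_of_le_one h0 h1 ((mem_range.1 hl).le.trans (mem_Ico.1 hk).1)
  rw [← sum_range_add_sum_Ico _ hij, Nat.cast_sub hij] at *
  nlinarith

lemma geom_sum_pair_le (h0 : 0 ≤ s) (h1 : s ≤ 1) (i j : ℕ) :
    i * (j - ∑ k ∈ range j, s ^ k) + j * (i - ∑ k ∈ range i, s ^ k) ≤
      (1 - s) * ((i ^ 2 - i) * ∑ k ∈ range j, s ^ k + (j ^ 2 - j) * ∑ k ∈ range i, s ^ k) := by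
  wlog hij : i ≤ j generalizing i j with H
  · linarith [H j i (le_of_not_ge hij)]
  have hi := mul_le_mul_of_nonneg_left (cast_sub_geom_sum_le h0 h1 i) (Nat.cast_nonneg j)
  have hj := mul_le_mul_of_nonneg_left (cast_sub_geom_sum_le h0 h1 j) (Nat.cast_nonneg i)
  -- `hi` and `hj` leave the slack `(1 - s) (j - i) (j ∑_{k<i} s^k - i ∑_{k<j} s^k) ≥ 0`
  have hcross := mul_nonneg (mul_nonneg (sub_nonneg.2 h1) (sub_nonneg.2 (Nat.cast_le.2 hij)))
    (sub_nonneg.2 (nat_mul_geom_sum_le_of_le h0 h1 hij))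
  nlinarith

end GeomSum

lemma tsum_mul_tsum_le_of_symm {u v x y : ℕ → ℝ}
    (hu : Summable u) (hv : Summable v) (hx : Summable x) (hy : Summable y)
    (h : ∀ i j, u i * v j + u j * v i ≤ x i * y j + x j * y i) :
    (∑' i, u i) * ∑' j, v j ≤ (∑' i, x i) * ∑' j, y j := by
  have hsymm : ∀ {a b : ℕ → ℝ}, Summable a → Summable b →
      ∑' i, ∑' j, (a i * b j + a j * b i) = 2 * ((∑' i, a i) * ∑' j, b j) := by
    intro a b ha hb
    simp_rw [fun i => (hb.mul_left (a i)).tsum_add (ha.mul_right (b i)), tsum_mul_left,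
      tsum_mul_right]
    rw [(ha.mul_right _).tsum_add (hb.mul_left _), tsum_mul_right, tsum_mul_left]
    ring
  have hsum : ∀ {a b : ℕ → ℝ}, Summable a → Summable b →
      Summable fun i => ∑' j, (a i * b j + a j * b i) := by
    intro a b ha hb
    simp_rw [fun i => (hb.mul_left (a i)).tsum_add (ha.mul_right (b i)), tsum_mul_left,
      tsum_mul_right]
    exact (ha.mul_right _).add (hb.mul_left _)
  have := Summable.tsum_le_tsum (fun i => Summable.tsum_le_tsum (h i)
    ((hv.mul_left _).add (hu.mul_right _)) ((hy.mul_left _).add (hx.mul_right _)))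
    (hsum hu hv) (hsum hx hy)
  rw [hsymm hu hv, hsymm hx hy] at this
  linarith

section Pgf

variable {r : ℕ → ℝ} {s : ℝ}

lemma summable_mul_pow (hr0 : ∀ i, 0 ≤ r i) (hr : Summable r) (h0 : 0 ≤ s) (h1 : s ≤ 1) :
    Summable fun i => r i * s ^ i :=
  hr.of_nonneg_of_le (fun i => mul_nonneg (hr0 i) (pow_nonneg h0 i))
    fun i => mul_le_of_le_one_right (hr0 i) (pow_le_one₀ h0 h1)

lemma mul_one_sub_le_one_sub_tsum_mul_pow (hr0 : ∀ i, 0 ≤ r i) (hr1 : HasSum r 1)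
    (h0 : 0 ≤ s) (h1 : s ≤ 1) : (1 - r 0) * (1 - s) ≤ 1 - ∑' i, r i * s ^ i := by
  have htail : HasSum (fun i => r (i + 1)) (1 - r 0) := by
    simpa using (hasSum_nat_add_iff' 1).2 hr1
  have hle : ∑' i, r (i + 1) * s ^ (i + 1) ≤ ∑' i, r (i + 1) * s :=
    Summable.tsum_le_tsum
      (fun i => mul_le_mul_of_nonneg_left (pow_le_of_le_one h0 h1 i.succ_ne_zero) (hr0 _))
      ((summable_nat_add_iff 1).2 (summable_mul_pow hr0 hr1.summable h0 h1))
      (htail.summable.mul_right s)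
  rw [(summable_mul_pow hr0 hr1.summable h0 h1).tsum_eq_zero_add, tsum_mul_right,
    htail.tsum_eq] at *
  simp only [pow_zero, mul_one]
  nlinarith

lemma tsum_mul_pow_mem_Icc (hr0 : ∀ i, 0 ≤ r i) (hr1 : HasSum r 1) (hs : s ∈ Icc (0 : ℝ) 1) :
    ∑' i, r i * s ^ i ∈ Icc (0 : ℝ) 1 := by
  have hr01 : r 0 ≤ 1 := by
    simpa [hr1.tsum_eq] using hr1.summable.le_tsum 0 fun i _ => hr0 i
  refine ⟨tsum_nonneg fun i => mul_nonneg (hr0 i) (pow_nonneg hs.1 i), ?_⟩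
  nlinarith [mul_one_sub_le_one_sub_tsum_mul_pow hr0 hr1 hs.1 hs.2, hs.2]

lemma tsum_mul_pow_lt_one (hr0 : ∀ i, 0 ≤ r i) (hr1 : HasSum r 1) (hr0lt : r 0 < 1)
    (h0 : 0 ≤ s) (h1 : s < 1) : ∑' i, r i * s ^ i < 1 := by
  nlinarith [mul_one_sub_le_one_sub_tsum_mul_pow hr0 hr1 h0 h1.le]

lemma one_sub_tsum_mul_pow_eq (hr0 : ∀ i, 0 ≤ r i) (hr1 : HasSum r 1) (h0 : 0 ≤ s)
    (h1 : s ≤ 1) :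
    1 - ∑' i, r i * s ^ i = (1 - s) * ∑' i, r i * ∑ k ∈ range i, s ^ k := by
  conv_lhs => rw [← hr1.tsum_eq]
  rw [← hr1.summable.tsum_sub (summable_mul_pow hr0 hr1.summable h0 h1),
    ← tsum_mul_left]
  exact tsum_congr fun i => by linear_combination -r i * mul_neg_geom_sum s i

/-- Agresti's bound `1 / (1 - f s) ≤ 1 / (f'(1) (1 - s)) + f''(1) / f'(1)²`. -/
lemma inv_one_sub_tsum_mul_pow_le (hr0 : ∀ i, 0 ≤ r i) (hr1 : HasSum r 1) (hr0lt : r 0 < 1)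
    (hr2 : Summable fun i : ℕ => (i : ℝ) ^ 2 * r i) (h0 : 0 ≤ s) (h1 : s < 1) :
    (1 - ∑' i, r i * s ^ i)⁻¹ ≤ ((∑' i : ℕ, i * r i) * (1 - s))⁻¹ +
      ((∑' i : ℕ, (i : ℝ) ^ 2 * r i) - ∑' i : ℕ, i * r i) / (∑' i : ℕ, i * r i) ^ 2 := by
  set A : ℕ → ℝ := fun i => ∑ k ∈ range i, s ^ k
  have hA0 : ∀ i, 0 ≤ A i := fun i => sum_nonneg fun k _ => pow_nonneg h0 k
  have hAi : ∀ i, A i ≤ i := geom_sum_le_card h0 h1.le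
  have hr1' : Summable fun i : ℕ => (i : ℝ) * r i :=
    hr2.of_nonneg_of_le (fun i => mul_nonneg i.cast_nonneg (hr0 i))
      fun i => mul_le_mul_of_nonneg_right (by exact_mod_cast Nat.le_self_pow two_ne_zero i) (hr0 i)
  have hrA : Summable fun i => r i * A i := hr1'.of_nonneg_of_le
    (fun i => mul_nonneg (hr0 i) (hA0 i)) fun i => by nlinarith [hr0 i, hAi i]
  set m := ∑' i : ℕ, (i : ℝ) * r i
  set m2 := ∑' i : ℕ, (i : ℝ) ^ 2 * r i
  set g := ∑' i, r i * A i
  have hfg : 1 - ∑' i, r i * s ^ i = (1 - s) * g := one_sub_tsum_mul_pow_eq hr0 hr1 h0 h1.le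
  have hg : 0 < g := by
    have := mul_one_sub_le_one_sub_tsum_mul_pow hr0 hr1 h0 h1.le
    nlinarith
  have hgm : g ≤ m := Summable.tsum_le_tsum (fun i => by nlinarith [hr0 i, hAi i]) hrA hr1'
  have hm : 0 < m := hg.trans_le hgm
  have hmg : m - g = ∑' i, r i * (i - A i) := by
    rw [← hr1'.tsum_sub hrA]; exact tsum_congr fun i => by ring
  have hm2m : (1 - s) * (m2 - m) = ∑' i : ℕ, (1 - s) * ((i ^ 2 - i) * r i) := by
    rw [tsum_mul_left, ← hr2.tsum_sub hr1']; congr 1; exact tsum_congr fun i => by ring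
  have key : m * (m - g) ≤ (1 - s) * (m2 - m) * g := by
    rw [hmg, hm2m]
    refine tsum_mul_tsum_le_of_symm hr1' (hr1'.sub hrA |>.congr fun i => by ring)
      ((hr2.sub hr1').mul_left (1 - s) |>.congr fun i => by ring) hrA fun i j => ?_
    have := mul_le_mul_of_nonneg_left (geom_sum_pair_le h0 h1.le i j)
      (mul_nonneg (hr0 i) (hr0 j))
    linear_combination this
  rw [hfg]
  have h1s : 0 < 1 - s := sub_pos.2 h1
  have hsplit : ((1 - s) * g)⁻¹ = (m * (1 - s))⁻¹ + m * (m - g) / ((1 - s) * g * m ^ 2) := by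
    field_simp
    ring
  rw [hsplit, add_le_add_iff_left, div_le_div_iff₀ (by positivity) (by positivity)]
  nlinarith [mul_le_mul_of_nonneg_right key (sq_nonneg m)]

end Pgf

section Iterate

variable {Φ : ℕ → ℝ → ℝ}

lemma HseqF_add (a n : ℕ) (z : ℝ) :
    HseqF Φ (a + n) z = HseqF Φ a (HseqF (fun k => Φ (a + k)) n z) := by
  induction n generalizing z with
  | zero => rfl
  | succ n ih => exact ih (Φ (a + n) z)

lemma mapsTo_HseqF {t : Set ℝ} (h : ∀ k, MapsTo (Φ k) t t) (n : ℕ) : MapsTo (HseqF Φ n) t t := by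
  induction n with
  | zero => exact mapsTo_id t
  | succ n ih => exact ih.comp (h n)

lemma prod_mul_one_sub_le_one_sub_HseqF {κ : ℕ → ℝ} (hκ : ∀ k, 0 ≤ κ k)
    (hmaps : ∀ k, MapsTo (Φ k) (Icc 0 1) (Icc 0 1))
    (hstep : ∀ k, ∀ z ∈ Icc (0 : ℝ) 1, κ k * (1 - z) ≤ 1 - Φ k z) (n : ℕ) :
    ∀ z ∈ Icc (0 : ℝ) 1, (∏ k ∈ range n, κ k) * (1 - z) ≤ 1 - HseqF Φ n z := by
  induction n with
  | zero => simp [HseqF]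
  | succ n ih =>
    intro z hz
    calc (∏ k ∈ range (n + 1), κ k) * (1 - z) = (∏ k ∈ range n, κ k) * (κ n * (1 - z)) := by
          rw [prod_range_succ, mul_assoc]
      _ ≤ (∏ k ∈ range n, κ k) * (1 - Φ n z) :=
          mul_le_mul_of_nonneg_left (hstep n z hz) (prod_nonneg fun k _ => hκ k)
      _ ≤ 1 - HseqF Φ (n + 1) z := ih _ (hmaps n hz)

lemma inv_one_sub_HseqF_le {Λ ν : ℕ → ℝ} (hΛ : ∀ k, 0 < Λ k)
    (hmaps : ∀ k, MapsTo (Φ k) (Ico 0 1) (Ico 0 1))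
    (hstep : ∀ k, ∀ z ∈ Ico (0 : ℝ) 1, (1 - Φ k z)⁻¹ ≤ Λ k * (Λ (k + 1) * (1 - z))⁻¹ + ν k)
    (n : ℕ) : ∀ z ∈ Ico (0 : ℝ) 1,
      (1 - HseqF Φ n z)⁻¹ ≤ Λ 0 * (∑ j ∈ range n, ν j / Λ j + (Λ n * (1 - z))⁻¹) := by
  induction n with
  | zero =>
    intro z _
    simp only [HseqF, range_zero, sum_empty, zero_add, mul_inv, mul_inv_cancel_left₀ (hΛ 0).ne',
      le_refl]
  | succ n ih =>
    intro z hz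
    have hn := hΛ n
    calc (1 - HseqF Φ n (Φ n z))⁻¹
        ≤ Λ 0 * (∑ j ∈ range n, ν j / Λ j + (Λ n)⁻¹ * (1 - Φ n z)⁻¹) := by
          rw [← mul_inv]; exact ih _ (hmaps n hz)
      _ ≤ Λ 0 * (∑ j ∈ range n, ν j / Λ j + (Λ n)⁻¹ * (Λ n * (Λ (n + 1) * (1 - z))⁻¹ + ν n)) := by
          gcongr
          · exact (hΛ 0).le
          · exact hstep n z hz
      _ = Λ 0 * (∑ j ∈ range (n + 1), ν j / Λ j + (Λ (n + 1) * (1 - z))⁻¹) := by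
          rw [sum_range_succ]; field_simp; ring

lemma exists_HseqF_zero_le_one_sub {Λ ν : ℕ → ℝ} {δ : ℝ} (hδ : 0 < δ) (hΛ : ∀ k, δ ≤ Λ k)
    (hν : ∀ k, 0 ≤ ν k) (hsum : Summable fun k => ν k / Λ k)
    (hmaps : ∀ k, MapsTo (Φ k) (Ico 0 1) (Ico 0 1))
    (hstep : ∀ k, ∀ z ∈ Ico (0 : ℝ) 1, (1 - Φ k z)⁻¹ ≤ Λ k * (Λ (k + 1) * (1 - z))⁻¹ + ν k) :
    ∃ ε > 0, ∀ n, HseqF Φ n 0 ≤ 1 - ε := by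
  have hΛpos k : 0 < Λ k := hδ.trans_le (hΛ k)
  set M := Λ 0 * (∑' k, ν k / Λ k + δ⁻¹)
  have hM : 0 < M := by
    have : 0 ≤ ∑' k, ν k / Λ k := tsum_nonneg fun k => div_nonneg (hν k) (hΛpos k).le
    have := hΛpos 0
    positivity
  refine ⟨M⁻¹, inv_pos.2 hM, fun n => ?_⟩
  have hz : HseqF Φ n 0 ∈ Ico (0 : ℝ) 1 := mapsTo_HseqF hmaps n ⟨le_rfl, one_pos⟩
  have hbound : (1 - HseqF Φ n 0)⁻¹ ≤ M := by
    refine (inv_one_sub_HseqF_le hΛpos hmaps hstep n 0 ⟨le_rfl, one_pos⟩).trans ?_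
    rw [sub_zero, mul_one]
    show _ ≤ Λ 0 * (∑' k, ν k / Λ k + δ⁻¹)
    gcongr
    · exact (hΛpos 0).le
    · exact hsum.sum_le_tsum _ fun k _ => div_nonneg (hν k) (hΛpos k).le
    · exact hΛ n
  have := (inv_le_comm₀ (sub_pos.2 hz.2) hM).1 hbound
  linarith

lemma exists_HseqF_zero_le_one_sub_of_shift {κ : ℕ → ℝ} {ε : ℝ} (n₀ : ℕ) (hκ : ∀ k, 0 < κ k)
    (hmaps : ∀ k, MapsTo (Φ k) (Icc 0 1) (Icc 0 1))
    (hstep : ∀ k, ∀ z ∈ Icc (0 : ℝ) 1, κ k * (1 - z) ≤ 1 - Φ k z) (hε : 0 < ε)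
    (hshift : ∀ n, HseqF (fun k => Φ (n₀ + k)) n 0 ≤ 1 - ε) :
    ∃ ε' > 0, ∀ n ≥ n₀, HseqF Φ n 0 ≤ 1 - ε' := by
  refine ⟨(∏ k ∈ range n₀, κ k) * ε, mul_pos (prod_pos fun k _ => hκ k) hε, fun n hn => ?_⟩
  obtain ⟨n, rfl⟩ := Nat.exists_eq_add_of_le hn
  have hz := mapsTo_HseqF (fun k => hmaps (n₀ + k)) n ⟨le_rfl, zero_le_one⟩
  have := prod_mul_one_sub_le_one_sub_HseqF (fun k => (hκ k).le) hmaps hstep n₀ _ hz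
  rw [HseqF_add]
  nlinarith [hshift n, prod_pos fun k (_ : k ∈ range n₀) => hκ k]

end Iterate

section Thinning

variable {ρ : ℕ → ℕ → ℝ} {n : ℕ} {p z : ℝ}

lemma mom_toReal (hρ0 : ∀ i, 0 ≤ ρ n i) : (mom ρ n).toReal = ∑' i : ℕ, (i : ℝ) * ρ n i := by
  rw [mom, ENNReal.tsum_toReal_eq fun i => mul_ne_top (natCast_ne_top i) ofReal_ne_top]
  exact tsum_congr fun i => by rw [toReal_mul, toReal_natCast, toReal_ofReal (hρ0 i)]

lemma mom2_toReal (hρ0 : ∀ i, 0 ≤ ρ n i) :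
    (mom2 ρ n).toReal = ∑' i : ℕ, (i : ℝ) ^ 2 * ρ n i := by
  rw [mom2, ENNReal.tsum_toReal_eq fun i =>
    mul_ne_top (pow_ne_top (natCast_ne_top i)) ofReal_ne_top]
  exact tsum_congr fun i => by rw [toReal_mul, toReal_pow, toReal_natCast, toReal_ofReal (hρ0 i)]

lemma mom_le_mom2 : mom ρ n ≤ mom2 ρ n :=
  ENNReal.tsum_le_tsum fun i => mul_le_mul_left (by
    exact_mod_cast Nat.le_self_pow two_ne_zero i) _

lemma summable_sq_mul_of_mom2_lt_top (hρ0 : ∀ i, 0 ≤ ρ n i) (h : mom2 ρ n < ⊤) :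
    Summable fun i : ℕ => (i : ℝ) ^ 2 * ρ n i :=
  (ENNReal.summable_toReal h.ne).congr fun i => by
    rw [toReal_mul, toReal_pow, toReal_natCast, toReal_ofReal (hρ0 i)]

lemma one_sub_add_mul_mem_Icc (hp : p ∈ Ioc (0 : ℝ) 1) (hz : z ∈ Icc (0 : ℝ) 1) :
    1 - p + p * z ∈ Icc (0 : ℝ) 1 := by
  obtain ⟨hp0, hp1⟩ := hp
  constructor <;> nlinarith [hz.1, hz.2]

lemma mapsTo_Phi_thinned_Icc (hρ0 : ∀ i, 0 ≤ ρ n i) (hρ1 : HasSum (ρ n) 1)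
    (hp : p ∈ Ioc (0 : ℝ) 1) :
    MapsTo (fun z => Phi ρ n (1 - p + p * z)) (Icc 0 1) (Icc 0 1) := fun _ hz =>
  tsum_mul_pow_mem_Icc hρ0 hρ1 (one_sub_add_mul_mem_Icc hp hz)

lemma mapsTo_Phi_thinned_Ico (hρ0 : ∀ i, 0 ≤ ρ n i) (hρ1 : HasSum (ρ n) 1) (hρlt : ρ n 0 < 1)
    (hp : p ∈ Ioc (0 : ℝ) 1) :
    MapsTo (fun z => Phi ρ n (1 - p + p * z)) (Ico 0 1) (Ico 0 1) := fun z hz =>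
  ⟨(mapsTo_Phi_thinned_Icc hρ0 hρ1 hp ⟨hz.1, hz.2.le⟩).1, tsum_mul_pow_lt_one hρ0 hρ1 hρlt
    (one_sub_add_mul_mem_Icc hp ⟨hz.1, hz.2.le⟩).1 (by nlinarith [hp.1, hz.2])⟩

lemma mul_one_sub_le_one_sub_Phi_thinned (hρ0 : ∀ i, 0 ≤ ρ n i) (hρ1 : HasSum (ρ n) 1)
    (hp : p ∈ Ioc (0 : ℝ) 1) (hz : z ∈ Icc (0 : ℝ) 1) :
    p * (1 - ρ n 0) * (1 - z) ≤ 1 - Phi ρ n (1 - p + p * z) := by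
  have hs := one_sub_add_mul_mem_Icc hp hz
  have := mul_one_sub_le_one_sub_tsum_mul_pow hρ0 hρ1 hs.1 hs.2
  rw [show 1 - (1 - p + p * z) = p * (1 - z) by ring] at this
  exact (le_of_eq (by ring)).trans this

lemma inv_one_sub_Phi_thinned_le (hρ0 : ∀ i, 0 ≤ ρ n i) (hρ1 : HasSum (ρ n) 1)
    (hρlt : ρ n 0 < 1) (hm2 : mom2 ρ n < ⊤) (hp : p ∈ Ioc (0 : ℝ) 1) (hz : z ∈ Ico (0 : ℝ) 1) :
    (1 - Phi ρ n (1 - p + p * z))⁻¹ ≤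
      (p * (mom ρ n).toReal * (1 - z))⁻¹ + ((mom2 ρ n - mom ρ n) / mom ρ n ^ 2).toReal := by
  have hs := one_sub_add_mul_mem_Icc hp ⟨hz.1, hz.2.le⟩
  have := inv_one_sub_tsum_mul_pow_le hρ0 hρ1 hρlt (summable_sq_mul_of_mom2_lt_top hρ0 hm2) hs.1
    (by nlinarith [hp.1, hz.2])
  rw [toReal_div, toReal_sub_of_le mom_le_mom2 hm2.ne, toReal_pow, mom_toReal hρ0,
    mom2_toReal hρ0]
  rw [show 1 - (1 - p + p * z) = p * (1 - z) by ring] at this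
  exact this.trans_eq (by ring_nf)

end Thinning

section Selection

variable {C : ℝ} {c : ℕ → ℝ} {n₁ : ℕ}

noncomputable def scaledProd (C : ℝ) (c : ℕ → ℝ) (n₁ k : ℕ) : ℝ := C ^ k * ∏ i ∈ Ico n₁ k, c i

lemma scaledProd_pos (hC : 0 < C) (hc : ∀ i, 0 < c i) (k : ℕ) : 0 < scaledProd C c n₁ k :=
  mul_pos (pow_pos hC k) (prod_pos fun i _ => hc i)

lemma scaledProd_succ {k : ℕ} (hk : n₁ ≤ k) :
    scaledProd C c n₁ (k + 1) = scaledProd C c n₁ k * (C * c k) := by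
  rw [scaledProd, scaledProd, prod_Ico_succ_top hk, pow_succ]
  ring

lemma exists_le_scaledProd (hC : 0 < C) (hc : ∀ i, 0 < c i)
    (hinf : 0 < ⨅ n : ℕ, C ^ n * ∏ i ∈ range (n + 1), c i) :
    ∃ δ > 0, ∀ k ≥ n₁, δ ≤ scaledProd C c n₁ k := by
  set δ₀ := ⨅ n : ℕ, C ^ n * ∏ i ∈ range (n + 1), c i
  have hδ₀ : ∀ k, min 1 (C * δ₀) ≤ C ^ k * ∏ i ∈ range k, c i := by
    rintro (_ | k)
    · simp
    · have hle : δ₀ ≤ C ^ k * ∏ i ∈ range (k + 1), c i :=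
        ciInf_le ⟨0, by rintro _ ⟨n, rfl⟩; exact (mul_pos (pow_pos hC n)
          (prod_pos fun i _ => hc i)).le⟩ k
      rw [pow_succ]
      nlinarith [min_le_right 1 (C * δ₀)]
  have hP : 0 < ∏ i ∈ range n₁, c i := prod_pos fun i _ => hc i
  refine ⟨min 1 (C * δ₀) / ∏ i ∈ range n₁, c i, div_pos (lt_min one_pos (mul_pos hC hinf)) hP,
    fun k hk => ?_⟩
  rw [div_le_iff₀ hP, scaledProd, mul_assoc, mul_comm (∏ i ∈ Ico n₁ k, c i),
    prod_range_mul_prod_Ico c hk]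
  exact hδ₀ k

noncomputable def thinProb (ρ : ℕ → ℕ → ℝ) (c : ℕ → ℝ) (C : ℝ) (n₀ n : ℕ) : ℝ :=
  if n < n₀ then 1 else C * c n / (mom ρ n).toReal

variable {ρ : ℕ → ℕ → ℝ} {n₀ : ℕ}

lemma thinProb_of_le {n : ℕ} (hn : n₀ ≤ n) : thinProb ρ c C n₀ n = C * c n / (mom ρ n).toReal :=
  if_neg (not_lt.2 hn)

lemma thinProb_mem_Ioc (hC : 0 < C) (hc : ∀ i, 0 < c i)
    (h : ∀ n ≥ n₀, C * c n < (mom ρ n).toReal) (n : ℕ) : thinProb ρ c C n₀ n ∈ Ioc (0 : ℝ) 1 := by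
  rcases lt_or_ge n n₀ with hn | hn
  · simp [thinProb, hn]
  · have hCc := mul_pos hC (hc n)
    rw [thinProb_of_le hn, Set.mem_Ioc, div_le_one (hCc.trans (h n hn))]
    exact ⟨div_pos hCc (hCc.trans (h n hn)), (h n hn).le⟩

lemma summable_thinProb (hsum : Summable fun n => c n / (mom ρ n).toReal) :
    Summable (thinProb ρ c C n₀) :=
  (hsum.mul_left C).congr_atTop <| eventually_atTop.2
    ⟨n₀, fun n hn => by rw [thinProb_of_le hn, mul_div_assoc]⟩

lemma eventually_mom2_lt_top_and_lt_mom (hm : ∀ n, 0 < mom ρ n)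
    (hm2 : ∀ᶠ n in atTop, mom2 ρ n < ⊤) (hC : 0 < C)
    (hsum : Summable fun n => c n / (mom ρ n).toReal) :
    ∀ᶠ n in atTop, mom2 ρ n < ⊤ ∧ C * c n < (mom ρ n).toReal := by
  filter_upwards [hm2, hsum.tendsto_atTop_zero.eventually (gt_mem_nhds (inv_pos.2 hC))]
    with n hn2 hlt
  have hpos : 0 < (mom ρ n).toReal := toReal_pos (hm n).ne' (mom_le_mom2.trans_lt hn2).ne
  rw [div_lt_iff₀ hpos] at hlt
  refine ⟨hn2, ?_⟩
  calc C * c n < C * (C⁻¹ * (mom ρ n).toReal) := mul_lt_mul_of_pos_left hlt hC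
    _ = (mom ρ n).toReal := by field_simp

lemma exists_HseqF_thinned_shift_le (hρ0 : ∀ n i, 0 ≤ ρ n i) (hρ1 : ∀ n, HasSum (ρ n) 1)
    (hρlt : ∀ n, ρ n 0 < 1) {p : ℕ → ℝ} (hp : ∀ n, p n ∈ Ioc (0 : ℝ) 1) (hn₀ : n₁ ≤ n₀)
    (hfin : ∀ n ≥ n₀, mom2 ρ n < ⊤) (hpm : ∀ n ≥ n₀, p n * (mom ρ n).toReal = C * c n)
    (hC : 0 < C) (hc : ∀ i, 0 < c i)
    (hconv : ∑' j : ℕ, ((mom2 ρ (n₁ + j) - mom ρ (n₁ + j)) / (mom ρ (n₁ + j)) ^ 2) /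
        ENNReal.ofReal (C ^ (n₁ + j) * ∏ i ∈ Finset.Ico n₁ (n₁ + j), c i) < ⊤)
    (hinf : 0 < ⨅ n : ℕ, C ^ n * ∏ i ∈ Finset.range (n + 1), c i) :
    ∃ ε > 0, ∀ n,
      HseqF (fun k z => Phi ρ (n₀ + k) (1 - p (n₀ + k) + p (n₀ + k) * z)) n 0 ≤ 1 - ε := by
  obtain ⟨δ, hδ, hδle⟩ := exists_le_scaledProd (n₁ := n₁) hC hc hinf
  have hsum : Summable fun j => ((mom2 ρ (n₁ + j) - mom ρ (n₁ + j)) / mom ρ (n₁ + j) ^ 2).toReal /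
      scaledProd C c n₁ (n₁ + j) :=
    (ENNReal.summable_toReal hconv.ne).congr fun j => by
      rw [toReal_div]; congr 1; exact toReal_ofReal (scaledProd_pos hC hc _).le
  obtain ⟨d, rfl⟩ := Nat.exists_eq_add_of_le hn₀
  refine exists_HseqF_zero_le_one_sub (Λ := fun k => scaledProd C c n₁ (n₁ + d + k))
    (ν := fun k => ((mom2 ρ (n₁ + d + k) - mom ρ (n₁ + d + k)) / mom ρ (n₁ + d + k) ^ 2).toReal)
    hδ (fun k => hδle _ (by omega)) (fun k => toReal_nonneg)
    ((summable_nat_add_iff d).2 hsum |>.congr fun k => by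
      rw [show n₁ + (k + d) = n₁ + d + k by omega])
    (fun k => mapsTo_Phi_thinned_Ico (hρ0 _) (hρ1 _) (hρlt _) (hp _)) fun k z hz => ?_
  have hk : n₁ + d ≤ n₁ + d + k := by omega
  refine (inv_one_sub_Phi_thinned_le (hρ0 _) (hρ1 _) (hρlt _) (hfin _ hk) (hp _) hz).trans_eq ?_
  rw [hpm _ hk]
  have hΛ := (scaledProd_pos (n₁ := n₁) hC hc (n₁ + d + k)).ne'
  rw [← add_assoc, scaledProd_succ (by omega)]
  field_simp

end Selection

/-- analytic core of the survival theorem for BPVEs with selection.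
Under the stated moment conditions (with a sequence `(c_i)` of positive reals with
`∑ c_i/m_i < ∞`, a constant `C > 0` and an index `n₁`), there are `n₀ ∈ ℕ` and
thinning probabilities `p_n ∈ (0,1]` with `∑ p_n < ∞` and `p_n = C·c_n/m_n` for
`n ≥ n₀`, such that the thinned BPVE with generating functions
`Φ̃_n(z) = Φ_n(1 − p_n + p_n z)` survives. -/
theorem thinned_bpve_survival (ρ : ℕ → ℕ → ℝ)
    (hρ0 : ∀ n i, 0 ≤ ρ n i) (hρ1 : ∀ n, HasSum (ρ n) 1)
    (hρlt : ∀ n, ρ n 0 < 1)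
    (hm : ∀ n, 0 < mom ρ n)
    (hm2 : ∀ᶠ n in atTop, mom2 ρ n < ⊤)
    (c : ℕ → ℝ) (hc : ∀ i, 0 < c i)
    (hcm : ∑' i : ℕ, ENNReal.ofReal (c i) / mom ρ i < ⊤)
    (n₁ : ℕ) (C : ℝ) (hC : 0 < C)
    (hconv : ∑' j : ℕ, ((mom2 ρ (n₁ + j) - mom ρ (n₁ + j)) / (mom ρ (n₁ + j)) ^ 2) /
        ENNReal.ofReal (C ^ (n₁ + j) * ∏ i ∈ Finset.Ico n₁ (n₁ + j), c i) < ⊤)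
    (hinf : 0 < ⨅ n : ℕ, C ^ n * ∏ i ∈ Finset.range (n + 1), c i) :
    ∃ n₀ : ℕ, ∃ p : ℕ → ℝ,
      (∀ n, p n ∈ Set.Ioc (0 : ℝ) 1) ∧ Summable p ∧
      (∀ n ≥ n₀, p n = C * c n / (mom ρ n).toReal) ∧
      ∀ q : ℝ,
        Tendsto (fun n => HseqF (fun n z => Phi ρ n (1 - p n + p n * z)) n 0)
          atTop (nhds q) →
        q < 1 := by
  have hsum : Summable fun n => c n / (mom ρ n).toReal :=
    (ENNReal.summable_toReal hcm.ne).congr fun n => by rw [toReal_div, toReal_ofReal (hc n).le]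
  obtain ⟨N, hN⟩ := eventually_atTop.1 (eventually_mom2_lt_top_and_lt_mom hm hm2 hC hsum)
  set n₀ := n₁ + N
  have hp := thinProb_mem_Ioc (n₀ := n₀) hC hc fun n hn => (hN n (by omega)).2
  refine ⟨n₀, thinProb ρ c C n₀, hp, summable_thinProb hsum, fun n hn => thinProb_of_le hn,
    fun q hq => ?_⟩
  have hpm : ∀ n ≥ n₀, thinProb ρ c C n₀ n * (mom ρ n).toReal = C * c n := fun n hn => by
    rw [thinProb_of_le hn, div_mul_cancel₀ _ ((mul_pos hC (hc n)).trans (hN n (by omega)).2).ne']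
  obtain ⟨ε, hε, hshift⟩ := exists_HseqF_thinned_shift_le hρ0 hρ1 hρlt hp (Nat.le_add_right n₁ N)
    (fun n hn => (hN n (by omega)).1) hpm hC hc hconv hinf
  obtain ⟨ε', hε', hH⟩ := exists_HseqF_zero_le_one_sub_of_shift n₀
    (fun k => mul_pos (hp k).1 (sub_pos.2 (hρlt k)))
    (fun k => mapsTo_Phi_thinned_Icc (hρ0 k) (hρ1 k) (hp k))
    (fun k z hz => mul_one_sub_le_one_sub_Phi_thinned (hρ0 k) (hρ1 k) (hp k) hz) hε hshift
  linarith [le_of_tendsto hq (eventually_atTop.2 ⟨n₀, hH⟩)]
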